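/- The map ζ ↦ z(ζ), where z(ζ) = hm(ζ;γ_E) + i·hm(ζ;γ_N) − hm(ζ;γ_W) − i·hm(ζ;γ_S), is an orientation-preserving diffeomorphism from the unit disc 𝔻 onto the open square ◇ = {x+iy : |x|+|y| < 1}. -/

import Mathlib

open Complex Metric

/-- The four angles `π/4 + m·π/2`, `m = 0,1,2,3`. -/
noncomputable def arcAngle (m : Fin 4) : ℝ := Real.pi / 4 + (m : ℕ) * (Real.pi / 2)


noncomputable def pfun (ζ : ℂ) : ℝ :=
  Real.arctan (Real.sqrt 2 * (ζ.re - ζ.im) / (1 - ζ.re ^ 2 - ζ.im ^ 2))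

noncomputable def qfun (ζ : ℂ) : ℝ :=
  Real.arctan (Real.sqrt 2 * (ζ.re + ζ.im) / (1 - ζ.re ^ 2 - ζ.im ^ 2))

noncomputable def Zmap (ζ : ℂ) : ℂ :=
  (((pfun ζ + qfun ζ) / Real.pi : ℝ) : ℂ) + I * (((qfun ζ - pfun ζ) / Real.pi : ℝ) : ℂ)

noncomputable def Tp (w : ℂ) : ℝ := Real.tan (Real.pi * (w.re - w.im) / 2)
noncomputable def Tq (w : ℂ) : ℝ := Real.tan (Real.pi * (w.re + w.im) / 2)
noncomputable def lam (w : ℂ) : ℝ := 1 / (1 + Real.sqrt (1 + (Tp w ^ 2 + Tq w ^ 2)))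
noncomputable def gmap (w : ℂ) : ℂ :=
  ((lam w * (Tq w + Tp w) / Real.sqrt 2 : ℝ) : ℂ)
    + I * ((lam w * (Tq w - Tp w) / Real.sqrt 2 : ℝ) : ℂ)

attribute [irreducible] pfun qfun Zmap Tp Tq lam gmap

lemma mem_ball_iff_sq (ζ : ℂ) : ζ ∈ ball (0:ℂ) 1 ↔ ζ.re ^ 2 + ζ.im ^ 2 < 1 := by
  rw [mem_ball_zero_iff]
  constructor <;> intro h <;>
    nlinarith [Complex.sq_norm ζ, Complex.normSq_apply ζ, norm_nonneg ζ]

lemma dpos_of_mem_ball {ζ : ℂ} (hζ : ζ ∈ ball (0:ℂ) 1) : 0 < 1 - ζ.re ^ 2 - ζ.im ^ 2 := by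
  have := (mem_ball_iff_sq ζ).1 hζ; linarith

lemma sqrt2_sq : Real.sqrt 2 ^ 2 = 2 := Real.sq_sqrt (by norm_num)

lemma sqrt2_pos : (0:ℝ) < Real.sqrt 2 := Real.sqrt_pos.2 (by norm_num)



lemma arcAngle0 : arcAngle 0 = Real.pi / 4 := by simp [arcAngle]
lemma arcAngle1 : arcAngle 1 = Real.pi / 2 + Real.pi / 4 := by
  have h : ((1 : Fin 4) : ℕ) = 1 := rfl
  rw [arcAngle, h]; push_cast; ring
lemma arcAngle2 : arcAngle 2 = arcAngle 0 + Real.pi := by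
  have h : ((2 : Fin 4) : ℕ) = 2 := rfl
  rw [arcAngle, arcAngle0, h]; push_cast; ring
lemma arcAngle3 : arcAngle 3 = arcAngle 1 + Real.pi := by
  have h : ((3 : Fin 4) : ℕ) = 3 := rfl
  rw [arcAngle, arcAngle1, h]; push_cast; ring

lemma exp_arc0 : Complex.exp ((arcAngle 0 : ℝ) * I)
    = ((Real.sqrt 2 / 2 : ℝ) : ℂ) + ((Real.sqrt 2 / 2 : ℝ) : ℂ) * I := by
  rw [arcAngle0, Complex.exp_mul_I]
  rw [show ((Real.pi / 4 : ℝ) : ℂ) = ((Real.pi / 4 : ℝ) : ℂ) from rfl]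
  rw [← Complex.ofReal_cos, ← Complex.ofReal_sin, Real.cos_pi_div_four, Real.sin_pi_div_four]

lemma exp_arc1 : Complex.exp ((arcAngle 1 : ℝ) * I)
    = ((-(Real.sqrt 2 / 2) : ℝ) : ℂ) + ((Real.sqrt 2 / 2 : ℝ) : ℂ) * I := by
  have h : ((arcAngle 1 : ℝ) : ℂ) * I = ((Real.pi / 2 : ℝ) : ℂ) * I + ((arcAngle 0 : ℝ) : ℂ) * I := by
    rw [arcAngle1, arcAngle0]; push_cast; ring
  rw [h, Complex.exp_add, exp_arc0]
  have h2 : Complex.exp (((Real.pi / 2 : ℝ) : ℂ) * I) = I := by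
    rw [Complex.exp_mul_I, ← Complex.ofReal_cos, ← Complex.ofReal_sin,
      Real.cos_pi_div_two, Real.sin_pi_div_two]
    simp
  rw [h2]
  push_cast
  linear_combination ((Real.sqrt 2 : ℂ)/2) * Complex.I_sq
lemma exp_arc2 : Complex.exp ((arcAngle 2 : ℝ) * I) = -Complex.exp ((arcAngle 0 : ℝ) * I) := by
  have h : ((arcAngle 2 : ℝ) : ℂ) * I = ((arcAngle 0 : ℝ) : ℂ) * I + (Real.pi : ℂ) * I := by
    rw [arcAngle2]; push_cast; ring
  rw [h, Complex.exp_add, Complex.exp_pi_mul_I]; ring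

lemma exp_arc3 : Complex.exp ((arcAngle 3 : ℝ) * I) = -Complex.exp ((arcAngle 1 : ℝ) * I) := by
  have h : ((arcAngle 3 : ℝ) : ℂ) * I = ((arcAngle 1 : ℝ) : ℂ) * I + (Real.pi : ℂ) * I := by
    rw [arcAngle3]; push_cast; ring
  rw [h, Complex.exp_add, Complex.exp_pi_mul_I]; ring

lemma sqrt2_sq' : Real.sqrt 2 ^ 2 = 2 := Real.sq_sqrt (by norm_num)

lemma prod02 {ζ : ℂ} (hd : (1 - ζ.re^2 - ζ.im^2) ≠ 0) :
    (Complex.exp ((arcAngle 0 : ℝ) * I) - ζ)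
        * (starRingEnd ℂ) (-(Complex.exp ((arcAngle 0 : ℝ) * I)) - ζ)
      = -(((1 - ζ.re^2 - ζ.im^2 : ℝ) : ℂ)
          * (1 + ((Real.sqrt 2 * (ζ.re - ζ.im) / (1 - ζ.re^2 - ζ.im^2) : ℝ) : ℂ) * I)) := by
  rw [exp_arc0]
  have hdC : ((1:ℂ) - (ζ.re:ℂ)^2 - (ζ.im:ℂ)^2) ≠ 0 := by
    intro h
    apply hd
    exact_mod_cast congrArg Complex.re h
  have hR : -(((1 - ζ.re^2 - ζ.im^2 : ℝ) : ℂ)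
          * (1 + ((Real.sqrt 2 * (ζ.re - ζ.im) / (1 - ζ.re^2 - ζ.im^2) : ℝ) : ℂ) * I))
      = ((ζ.re^2 + ζ.im^2 - 1 : ℝ) : ℂ) + ((Real.sqrt 2 * (ζ.im - ζ.re) : ℝ) : ℂ) * I := by
    push_cast
    field_simp
    ring
  rw [hR]
  apply Complex.ext <;>
    simp only [Complex.mul_re, Complex.mul_im, Complex.sub_re, Complex.sub_im,
      Complex.add_re, Complex.add_im, Complex.neg_re, Complex.neg_im,
      Complex.conj_re, Complex.conj_im, Complex.ofReal_re, Complex.ofReal_im,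
      Complex.I_re, Complex.I_im, Complex.one_re, Complex.one_im]
  · ring_nf
    linear_combination (-1/2 : ℝ) * sqrt2_sq'
  · ring_nf

lemma prod13 {ζ : ℂ} (hd : (1 - ζ.re^2 - ζ.im^2) ≠ 0) :
    (Complex.exp ((arcAngle 1 : ℝ) * I) - ζ)
        * (starRingEnd ℂ) (-(Complex.exp ((arcAngle 1 : ℝ) * I)) - ζ)
      = -(((1 - ζ.re^2 - ζ.im^2 : ℝ) : ℂ)
          * (1 + ((Real.sqrt 2 * (ζ.re + ζ.im) / (1 - ζ.re^2 - ζ.im^2) : ℝ) : ℂ) * I)) := by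
  rw [exp_arc1]
  have hdC : ((1:ℂ) - (ζ.re:ℂ)^2 - (ζ.im:ℂ)^2) ≠ 0 := by
    intro h
    apply hd
    exact_mod_cast congrArg Complex.re h
  have hR : -(((1 - ζ.re^2 - ζ.im^2 : ℝ) : ℂ)
          * (1 + ((Real.sqrt 2 * (ζ.re + ζ.im) / (1 - ζ.re^2 - ζ.im^2) : ℝ) : ℂ) * I))
      = ((ζ.re^2 + ζ.im^2 - 1 : ℝ) : ℂ) + ((-(Real.sqrt 2) * (ζ.im + ζ.re) : ℝ) : ℂ) * I := by
    push_cast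
    field_simp
    ring
  rw [hR]
  apply Complex.ext <;>
    simp only [Complex.mul_re, Complex.mul_im, Complex.sub_re, Complex.sub_im,
      Complex.add_re, Complex.add_im, Complex.neg_re, Complex.neg_im,
      Complex.conj_re, Complex.conj_im, Complex.ofReal_re, Complex.ofReal_im,
      Complex.I_re, Complex.I_im, Complex.one_re, Complex.one_im]
  · ring_nf
    linear_combination (-1/2 : ℝ) * sqrt2_sq'
  · ring_nf

lemma lock {f : ℂ → ℝ} (hf : ContinuousOn f (ball 0 1))
    (hval : ∀ ζ ∈ ball (0:ℂ) 1, ∃ n : ℤ, f ζ = n * (2 * Real.pi))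
    (h0 : f 0 = 0) : ∀ ζ ∈ ball (0:ℂ) 1, f ζ = 0 := by
  have hπ := Real.pi_pos
  have himg : IsPreconnected (f '' ball 0 1) :=
    ((convex_ball (0:ℂ) 1).isPreconnected).image f hf
  have hOC : (f '' ball 0 1).OrdConnected := himg.ordConnected
  have h0mem : (0:ℝ) ∈ f '' ball 0 1 := ⟨0, by simp, h0⟩
  have hnotpi : ∀ c : ℝ, c ∈ f '' ball 0 1 → c ≠ Real.pi ∧ c ≠ -Real.pi := by
    intro c hc
    obtain ⟨ζ', hζ', rfl⟩ := hc
    obtain ⟨m, hm⟩ := hval ζ' hζ'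
    constructor <;> intro hEq <;> rw [hEq] at hm
    · have hz : (2*(m:ℝ) - 1) * Real.pi = 0 := by linarith
      rcases mul_eq_zero.1 hz with h' | h'
      · have : ((2*m - 1 : ℤ) : ℝ) = 0 := by push_cast; linarith
        have : (2*m - 1 : ℤ) = 0 := by exact_mod_cast this
        omega
      · linarith
    · have hz : (2*(m:ℝ) + 1) * Real.pi = 0 := by linarith
      rcases mul_eq_zero.1 hz with h' | h'
      · have : ((2*m + 1 : ℤ) : ℝ) = 0 := by push_cast; linarith
        have : (2*m + 1 : ℤ) = 0 := by exact_mod_cast this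
        omega
      · linarith
  intro ζ hζ
  obtain ⟨n, hn⟩ := hval ζ hζ
  have hfmem : f ζ ∈ f '' ball 0 1 := ⟨ζ, hζ, rfl⟩
  rcases lt_trichotomy n 0 with hneg | rfl | hpos
  · exfalso
    have hn1 : (n:ℝ) ≤ -1 := by
      have : n ≤ -1 := by omega
      exact_mod_cast this
    have hle : f ζ ≤ -(2*Real.pi) := by nlinarith
    have hmem : -Real.pi ∈ f '' ball 0 1 :=
      hOC.out hfmem h0mem ⟨by linarith, by linarith⟩
    exact (hnotpi _ hmem).2 rfl
  · simpa using hn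
  · exfalso
    have hn1 : (1:ℝ) ≤ (n:ℝ) := by exact_mod_cast hpos
    have hle : 2*Real.pi ≤ f ζ := by nlinarith
    have hmem : Real.pi ∈ f '' ball 0 1 :=
      hOC.out h0mem hfmem ⟨by linarith, by linarith⟩
    exact (hnotpi _ hmem).1 rfl

lemma exp_lock {ζ ω : ℂ} (hζ : ζ ∈ ball (0:ℂ) 1) (hω : ‖ω‖ = 1)
    {gg α β : ℝ}
    (hprod : (ω - ζ) * (starRingEnd ℂ) (-ω - ζ)
        = -(((1 - ζ.re^2 - ζ.im^2 : ℝ) : ℂ) * (1 + (gg:ℂ) * I)))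
    (hα : (‖ω - ζ‖ : ℂ) * Complex.exp ((α:ℝ) * I) = ω - ζ)
    (hβ : (‖-ω - ζ‖ : ℂ) * Complex.exp ((β:ℝ) * I) = -ω - ζ) :
    Complex.exp ((↑(α - β + Real.pi - Real.arctan gg)) * I) = 1 := by
  have habsζ : ‖ζ‖ < 1 := by
    exact mem_ball_zero_iff.1 hζ
  have hd : 0 < 1 - ζ.re^2 - ζ.im^2 := by
    have := dpos_of_mem_ball hζ; nlinarith []
  set d : ℝ := 1 - ζ.re^2 - ζ.im^2 with hd_def
  set R : ℝ := Real.sqrt (1 + gg^2) with hR_def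
  have hRpos : 0 < R := Real.sqrt_pos.2 (by positivity)
  have hR2 : R^2 = 1 + gg^2 := Real.sq_sqrt (by positivity)
  -- nonvanishing
  have hr0 : 0 < ‖ω - ζ‖ := by
    have h1 : ‖ω‖ ≤ ‖ω - ζ‖ + ‖ζ‖ := by
      calc ‖ω‖ = ‖(ω - ζ) + ζ‖ := by ring_nf
      _ ≤ _ := norm_add_le _ _
    rw [hω] at h1; linarith
  have hr1 : 0 < ‖-ω - ζ‖ := by
    have h1 : ‖-ω‖ ≤ ‖-ω - ζ‖ + ‖ζ‖ := by
      calc ‖-ω‖ = ‖(-ω - ζ) + ζ‖ := by ring_nf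
      _ ≤ _ := norm_add_le _ _
    rw [norm_neg, hω] at h1; linarith
  have hne0 : ω - ζ ≠ 0 := by
    intro h; rw [h] at hr0; simp at hr0
  have hne1 : -ω - ζ ≠ 0 := by
    intro h; rw [h] at hr1; simp at hr1
  set r0 : ℝ := ‖ω - ζ‖
  set r1 : ℝ := ‖-ω - ζ‖
  have hr0C : (r0 : ℂ) ≠ 0 := by exact_mod_cast hr0.ne'
  have hr1C : (r1 : ℂ) ≠ 0 := by exact_mod_cast hr1.ne'
  have hRC : (R : ℂ) ≠ 0 := by exact_mod_cast hRpos.ne'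
  have hggI : (1 : ℂ) + (gg:ℂ)*I ≠ 0 := by
    intro h
    have := congrArg Complex.re h
    simp at this
  -- abs (1 + gg I) = R
  have habs1 : ‖1 + (gg:ℂ)*I‖ = R := by
    rw [Complex.norm_def, Complex.normSq_apply, hR_def]
    congr 1
    simp
    ring
  -- abs product
  have habsA : r0 * r1 = d * R := by
    have h1 : r0 * r1 = ‖(ω - ζ) * (starRingEnd ℂ) (-ω - ζ)‖ := by
      rw [norm_mul, Complex.norm_conj]
    rw [h1, hprod, norm_neg, norm_mul, habs1, Complex.norm_of_nonneg hd.le]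
  have habsAC : (r0 : ℂ) * (r1 : ℂ) = (d : ℂ) * (R : ℂ) := by exact_mod_cast congrArg (Complex.ofReal) habsA
  -- exp of arctan
  have hexp_p : Complex.exp ((Real.arctan gg : ℝ) * I) = (1 + (gg:ℂ)*I) / (R:ℂ) := by
    rw [Complex.exp_mul_I, ← Complex.ofReal_cos, ← Complex.ofReal_sin,
      Real.cos_arctan, Real.sin_arctan]
    rw [← hR_def]
    push_cast
    field_simp
  -- conj nonzero
  have hconj_ne : (starRingEnd ℂ) (-ω - ζ) ≠ 0 := by
    intro h
    apply hne1
    have := congrArg (starRingEnd ℂ) h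
    simpa using this
  have hC : (-ω - ζ) * (starRingEnd ℂ) (-ω - ζ) = ((r1:ℂ))^2 := by
    rw [Complex.mul_conj]
    rw [← Complex.sq_norm]
    push_cast
    ring
  -- exp values
  have hEα : Complex.exp ((α:ℝ) * I) = (ω - ζ) / (r0:ℂ) := by
    rw [eq_div_iff hr0C, mul_comm]; exact hα
  have hEβ : Complex.exp ((β:ℝ) * I) = (-ω - ζ) / (r1:ℂ) := by
    rw [eq_div_iff hr1C, mul_comm]; exact hβ
  have split : ((α - β + Real.pi - Real.arctan gg : ℝ) : ℂ) * I
      = ((α:ℂ)*I + (Real.pi:ℂ)*I) - ((β:ℂ)*I + (Real.arctan gg : ℂ)*I) := by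
    push_cast; ring
  rw [split, Complex.exp_sub, Complex.exp_add, Complex.exp_add, Complex.exp_pi_mul_I]
  rw [show ((Real.arctan gg : ℂ)) * I = ((Real.arctan gg : ℝ) : ℂ) * I from rfl, hexp_p]
  rw [div_eq_one_iff_eq (mul_ne_zero (Complex.exp_ne_zero _) (div_ne_zero hggI hRC))]
  rw [hEα, hEβ]
  rw [div_mul_eq_mul_div, div_mul_div_comm, div_eq_div_iff hr0C (mul_ne_zero hr1C hRC)]
  apply mul_right_cancel₀ hconj_ne
  linear_combination (-(↑r1*↑R)) * hprod - ((1+(gg:ℂ)*I)*↑r0) * hC - (↑r1*(1+(gg:ℂ)*I)) * habsAC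


lemma pfun_eq : pfun = fun ζ : ℂ =>
    Real.arctan (Real.sqrt 2 * (ζ.re - ζ.im) / (1 - ζ.re ^ 2 - ζ.im ^ 2)) := by
  funext ζ; rw [pfun]

lemma qfun_eq : qfun = fun ζ : ℂ =>
    Real.arctan (Real.sqrt 2 * (ζ.re + ζ.im) / (1 - ζ.re ^ 2 - ζ.im ^ 2)) := by
  funext ζ; rw [qfun]

lemma pfun_contOn : ContinuousOn pfun (ball 0 1) := by
  rw [pfun_eq]
  apply Real.continuous_arctan.comp_continuousOn
  apply ContinuousOn.div
  · exact (continuous_const.mul (Complex.continuous_re.sub Complex.continuous_im)).continuousOn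
  · exact ((continuous_const.sub (Complex.continuous_re.pow 2)).sub
      (Complex.continuous_im.pow 2)).continuousOn
  · exact fun ζ hζ => (dpos_of_mem_ball hζ).ne'

lemma qfun_contOn : ContinuousOn qfun (ball 0 1) := by
  rw [qfun_eq]
  apply Real.continuous_arctan.comp_continuousOn
  apply ContinuousOn.div
  · exact (continuous_const.mul (Complex.continuous_re.add Complex.continuous_im)).continuousOn
  · exact ((continuous_const.sub (Complex.continuous_re.pow 2)).sub
      (Complex.continuous_im.pow 2)).continuousOn
  · exact fun ζ hζ => (dpos_of_mem_ball hζ).ne'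

lemma adiff0 {a : Fin 4 → ℂ → ℝ}
    (hacont : ∀ m, ContinuousOn (a m) (ball 0 1))
    (haarg : ∀ m, ∀ ζ ∈ ball (0:ℂ) 1,
      (‖Complex.exp ((arcAngle m : ℝ) * I) - ζ‖ : ℂ)
          * Complex.exp ((a m ζ : ℝ) * I)
        = Complex.exp ((arcAngle m : ℝ) * I) - ζ)
    (ha0 : ∀ m, a m 0 = arcAngle m) :
    ∀ ζ ∈ ball (0:ℂ) 1, a 0 ζ - a 2 ζ = -Real.pi + pfun ζ := by
  have hres := lock (f := fun ζ => a 0 ζ - a 2 ζ + Real.pi - pfun ζ) ?cont ?val ?zero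
  · intro ζ hζ
    have := hres ζ hζ
    linarith
  case cont =>
    exact (((hacont 0).sub (hacont 2)).add continuousOn_const).sub pfun_contOn
  case val =>
    intro ζ hζ
    have hd := dpos_of_mem_ball hζ
    have hβ := haarg 2 ζ hζ
    rw [exp_arc2] at hβ
    have h1 := exp_lock hζ (Complex.norm_exp_ofReal_mul_I _) (prod02 hd.ne') (haarg 0 ζ hζ) hβ
    rw [Complex.exp_eq_one_iff] at h1
    obtain ⟨n, hn⟩ := h1
    refine ⟨n, ?_⟩
    have h2 : ((a 0 ζ - a 2 ζ + Real.pi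
        - Real.arctan (Real.sqrt 2 * (ζ.re - ζ.im) / (1 - ζ.re^2 - ζ.im^2)) : ℝ) : ℂ)
        = ((n * (2*Real.pi) : ℝ) : ℂ) := by
      apply mul_right_cancel₀ Complex.I_ne_zero
      rw [hn]; push_cast; ring
    have h3 : a 0 ζ - a 2 ζ + Real.pi
        - Real.arctan (Real.sqrt 2 * (ζ.re - ζ.im) / (1 - ζ.re^2 - ζ.im^2))
        = n * (2*Real.pi) := by exact_mod_cast h2
    simpa [pfun] using h3
  case zero =>
    have h0 : (0:ℂ).re = 0 := rfl
    have h1 : (0:ℂ).im = 0 := rfl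
    simp [ha0 0, ha0 2, arcAngle2, arcAngle0, pfun, h0, h1]

lemma adiff1 {a : Fin 4 → ℂ → ℝ}
    (hacont : ∀ m, ContinuousOn (a m) (ball 0 1))
    (haarg : ∀ m, ∀ ζ ∈ ball (0:ℂ) 1,
      (‖Complex.exp ((arcAngle m : ℝ) * I) - ζ‖ : ℂ)
          * Complex.exp ((a m ζ : ℝ) * I)
        = Complex.exp ((arcAngle m : ℝ) * I) - ζ)
    (ha0 : ∀ m, a m 0 = arcAngle m) :
    ∀ ζ ∈ ball (0:ℂ) 1, a 1 ζ - a 3 ζ = -Real.pi + qfun ζ := by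
  have hres := lock (f := fun ζ => a 1 ζ - a 3 ζ + Real.pi - qfun ζ) ?cont ?val ?zero
  · intro ζ hζ
    have := hres ζ hζ
    linarith
  case cont =>
    exact (((hacont 1).sub (hacont 3)).add continuousOn_const).sub qfun_contOn
  case val =>
    intro ζ hζ
    have hd := dpos_of_mem_ball hζ
    have hβ := haarg 3 ζ hζ
    rw [exp_arc3] at hβ
    have h1 := exp_lock hζ (Complex.norm_exp_ofReal_mul_I _) (prod13 hd.ne') (haarg 1 ζ hζ) hβ
    rw [Complex.exp_eq_one_iff] at h1
    obtain ⟨n, hn⟩ := h1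
    refine ⟨n, ?_⟩
    have h2 : ((a 1 ζ - a 3 ζ + Real.pi
        - Real.arctan (Real.sqrt 2 * (ζ.re + ζ.im) / (1 - ζ.re^2 - ζ.im^2)) : ℝ) : ℂ)
        = ((n * (2*Real.pi) : ℝ) : ℂ) := by
      apply mul_right_cancel₀ Complex.I_ne_zero
      rw [hn]; push_cast; ring
    have h3 : a 1 ζ - a 3 ζ + Real.pi
        - Real.arctan (Real.sqrt 2 * (ζ.re + ζ.im) / (1 - ζ.re^2 - ζ.im^2))
        = n * (2*Real.pi) := by exact_mod_cast h2
    simpa [qfun] using h3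
  case zero =>
    have h0 : (0:ℂ).re = 0 := rfl
    have h1 : (0:ℂ).im = 0 := rfl
    simp [ha0 1, ha0 3, arcAngle3, arcAngle1, qfun, h0, h1]

lemma Zmap_re (ζ : ℂ) : (Zmap ζ).re = (pfun ζ + qfun ζ)/Real.pi := by
  simp [Zmap]

lemma Zmap_im (ζ : ℂ) : (Zmap ζ).im = (qfun ζ - pfun ζ)/Real.pi := by
  simp [Zmap]

lemma pfun_lt (ζ : ℂ) : |pfun ζ| < Real.pi/2 := by
  rw [pfun, abs_lt]
  exact ⟨Real.neg_pi_div_two_lt_arctan _, Real.arctan_lt_pi_div_two _⟩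

lemma qfun_lt (ζ : ℂ) : |qfun ζ| < Real.pi/2 := by
  rw [qfun, abs_lt]
  exact ⟨Real.neg_pi_div_two_lt_arctan _, Real.arctan_lt_pi_div_two _⟩

lemma Zmap_mapsTo : Set.MapsTo Zmap (ball (0:ℂ) 1) {w : ℂ | |w.re| + |w.im| < 1} := by
  intro ζ _
  have hπ := Real.pi_pos
  have hp := abs_lt.1 (pfun_lt ζ)
  have hq := abs_lt.1 (qfun_lt ζ)
  simp only [Set.mem_setOf_eq, Zmap_re, Zmap_im]
  rcases abs_cases ((pfun ζ + qfun ζ)/Real.pi) with ⟨hX, _⟩ | ⟨hX, _⟩ <;>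
    rcases abs_cases ((qfun ζ - pfun ζ)/Real.pi) with ⟨hY, _⟩ | ⟨hY, _⟩ <;>
    rw [hX, hY] <;>
    [ (have h : (pfun ζ + qfun ζ)/Real.pi + (qfun ζ - pfun ζ)/Real.pi = 2*qfun ζ/Real.pi := by ring);
      (have h : (pfun ζ + qfun ζ)/Real.pi + -((qfun ζ - pfun ζ)/Real.pi) = 2*pfun ζ/Real.pi := by ring);
      (have h : -((pfun ζ + qfun ζ)/Real.pi) + (qfun ζ - pfun ζ)/Real.pi = 2*(-pfun ζ)/Real.pi := by ring);
      (have h : -((pfun ζ + qfun ζ)/Real.pi) + -((qfun ζ - pfun ζ)/Real.pi) = 2*(-qfun ζ)/Real.pi := by ring)] <;>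
    rw [h, div_lt_one hπ] <;> linarith

lemma gmap_Zmap {ζ : ℂ} (hζ : ζ ∈ ball (0:ℂ) 1) : gmap (Zmap ζ) = ζ := by
  have hπ := Real.pi_pos
  have hd := dpos_of_mem_ball hζ
  have hs2 := sqrt2_sq
  have hs2pos := sqrt2_pos
  set u := ζ.re with hu
  set v := ζ.im with hv
  set d : ℝ := 1 - u^2 - v^2 with hd_def
  have hargp : Real.pi * ((Zmap ζ).re - (Zmap ζ).im) / 2 = pfun ζ := by
    rw [Zmap_re, Zmap_im]; field_simp; ring
  have hargq : Real.pi * ((Zmap ζ).re + (Zmap ζ).im) / 2 = qfun ζ := by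
    rw [Zmap_re, Zmap_im]; field_simp; ring
  have hTp : Tp (Zmap ζ) = Real.sqrt 2 * (u - v) / d := by
    rw [Tp, hargp, pfun, Real.tan_arctan]
  have hTq : Tq (Zmap ζ) = Real.sqrt 2 * (u + v) / d := by
    rw [Tq, hargq, qfun, Real.tan_arctan]
  have hsum : 1 + (Tp (Zmap ζ)^2 + Tq (Zmap ζ)^2) = ((1 + u^2 + v^2)/d)^2 := by
    rw [hTp, hTq]
    field_simp
    ring_nf
    simp only [hs2]
    ring
  have hsqrt : Real.sqrt (1 + (Tp (Zmap ζ)^2 + Tq (Zmap ζ)^2)) = (1 + u^2 + v^2)/d := by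
    rw [hsum, Real.sqrt_sq (by positivity)]
  have hdne : d ≠ 0 := hd.ne'
  have hlam : lam (Zmap ζ) = d/2 := by
    have h1 : 1 + (1+u^2+v^2)/d = 2/d := by
      field_simp
      rw [hd_def]; ring
    rw [lam, hsqrt, h1, one_div_div]
  apply Complex.ext
  · show (_ : ℝ) = u
    rw [gmap]
    simp only [Complex.add_re, Complex.ofReal_re, Complex.mul_re, Complex.I_re,
      Complex.ofReal_im, Complex.I_im]
    rw [hlam, hTp, hTq]
    field_simp
    ring
  · show (_ : ℝ) = v
    rw [gmap]
    simp only [Complex.add_im, Complex.ofReal_im, Complex.mul_im, Complex.I_re,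
      Complex.ofReal_re, Complex.I_im]
    rw [hlam, hTp, hTq]
    field_simp
    ring

lemma gmap_facts {w : ℂ} (hw : |w.re| + |w.im| < 1) :
    gmap w ∈ ball (0:ℂ) 1 ∧ Zmap (gmap w) = w := by
  have hπ := Real.pi_pos
  have hs2 := sqrt2_sq
  have hs2pos := sqrt2_pos
  have hre1 : |w.re - w.im| < 1 := by
    rcases abs_cases w.re with ⟨h1, _⟩ | ⟨h1, _⟩ <;> rcases abs_cases w.im with ⟨h2, _⟩ | ⟨h2, _⟩ <;>
      rw [abs_lt] <;> constructor <;> linarith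
  have hre2 : |w.re + w.im| < 1 := by
    rcases abs_cases w.re with ⟨h1, _⟩ | ⟨h1, _⟩ <;> rcases abs_cases w.im with ⟨h2, _⟩ | ⟨h2, _⟩ <;>
      rw [abs_lt] <;> constructor <;> linarith
  have hre1' := abs_lt.1 hre1
  have hre2' := abs_lt.1 hre2
  have hm1 := mul_lt_mul_of_pos_left hre1'.2 hπ
  have hm2 := mul_lt_mul_of_pos_left hre1'.1 hπ
  have hm3 := mul_lt_mul_of_pos_left hre2'.2 hπ
  have hm4 := mul_lt_mul_of_pos_left hre2'.1 hπ
  have hp1 : -(Real.pi/2) < Real.pi * (w.re - w.im) / 2 := by nlinarith [hm2]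
  have hp2 : Real.pi * (w.re - w.im) / 2 < Real.pi/2 := by nlinarith [hm1]
  have hq1 : -(Real.pi/2) < Real.pi * (w.re + w.im) / 2 := by nlinarith [hm4]
  have hq2 : Real.pi * (w.re + w.im) / 2 < Real.pi/2 := by nlinarith [hm3]
  set T1 : ℝ := Tp w with hT1
  set T2 : ℝ := Tq w with hT2
  set σ : ℝ := Real.sqrt (1 + (T1^2 + T2^2)) with hσ_def
  have hσ2 : σ^2 = 1 + (T1^2 + T2^2) := Real.sq_sqrt (by positivity)
  have hσ1 : 1 ≤ σ := by
    rw [show (1:ℝ) = Real.sqrt 1 by simp [Real.sqrt_one], hσ_def]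
    exact Real.sqrt_le_sqrt (by nlinarith)
  have hσpos : (0:ℝ) < 1 + σ := by linarith
  have hlam_pos : 0 < lam w := by
    rw [lam]; positivity
  have hlam_le : lam w * (1 + σ) = 1 := by
    rw [lam, ← hσ_def]
    field_simp
  have hls : lam w * σ = 1 - lam w := by linear_combination hlam_le
  have hls2 : (lam w)^2 * σ^2 = (1 - lam w)^2 := by
    linear_combination (lam w * σ + 1 - lam w) * hls
  -- coordinates of gmap w
  have hgre : (gmap w).re = lam w * (T2 + T1) / Real.sqrt 2 := by
    rw [gmap]
    simp [Complex.add_re, Complex.ofReal_re, Complex.mul_re]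
    exact Or.inl rfl
  have hgim : (gmap w).im = lam w * (T2 - T1) / Real.sqrt 2 := by
    rw [gmap]
    simp [Complex.add_im, Complex.ofReal_im, Complex.mul_im]
    exact Or.inl rfl
  have hr2 : (gmap w).re^2 + (gmap w).im^2 = 1 - 2 * lam w := by
    rw [hgre, hgim]
    rw [div_pow, div_pow, hs2]
    have hTT : T1^2 + T2^2 = σ^2 - 1 := by linarith
    field_simp
    linear_combination 2 * (lam w)^2 * hTT + 2 * hls2
  have hball : gmap w ∈ ball (0:ℂ) 1 := by
    rw [mem_ball_iff_sq, hr2]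
    linarith
  refine ⟨hball, ?_⟩
  have hd : 0 < 1 - (gmap w).re^2 - (gmap w).im^2 := dpos_of_mem_ball hball
  have hdval : 1 - (gmap w).re^2 - (gmap w).im^2 = 2 * lam w := by linarith [hr2]
  have hpfun : pfun (gmap w) = Real.pi * (w.re - w.im) / 2 := by
    rw [pfun, hdval, hgre, hgim]
    have harg : Real.sqrt 2 * (lam w * (T2 + T1) / Real.sqrt 2 - lam w * (T2 - T1) / Real.sqrt 2)
        / (2 * lam w) = T1 := by
      field_simp
      ring
    rw [harg, hT1, Tp, Real.arctan_tan hp1 hp2]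
  have hqfun : qfun (gmap w) = Real.pi * (w.re + w.im) / 2 := by
    rw [qfun, hdval, hgre, hgim]
    have harg : Real.sqrt 2 * (lam w * (T2 + T1) / Real.sqrt 2 + lam w * (T2 - T1) / Real.sqrt 2)
        / (2 * lam w) = T2 := by
      field_simp
      ring
    rw [harg, hT2, Tq, Real.arctan_tan hq1 hq2]
  apply Complex.ext
  · rw [Zmap_re, hpfun, hqfun]
    field_simp
    ring
  · rw [Zmap_im, hpfun, hqfun]
    field_simp
    ring

lemma Zmap_eq : Zmap = fun ζ : ℂ =>
    (((pfun ζ + qfun ζ) / Real.pi : ℝ) : ℂ) + I * (((qfun ζ - pfun ζ) / Real.pi : ℝ) : ℂ) := by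
  funext ζ; rw [Zmap]

lemma Tp_eq : Tp = fun w : ℂ => Real.tan (Real.pi * (w.re - w.im) / 2) := by
  funext w; rw [Tp]

lemma Tq_eq : Tq = fun w : ℂ => Real.tan (Real.pi * (w.re + w.im) / 2) := by
  funext w; rw [Tq]

lemma lam_eq : lam = fun w : ℂ => 1 / (1 + Real.sqrt (1 + (Tp w ^ 2 + Tq w ^ 2))) := by
  funext w; rw [lam]

lemma gmap_eq : gmap = fun w : ℂ =>
    ((lam w * (Tq w + Tp w) / Real.sqrt 2 : ℝ) : ℂ)
      + I * ((lam w * (Tq w - Tp w) / Real.sqrt 2 : ℝ) : ℂ) := by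
  funext w; rw [gmap]

lemma contDiff_re : ContDiff ℝ (⊤ : ℕ∞) (fun ζ : ℂ => ζ.re) := Complex.reCLM.contDiff
lemma contDiff_im : ContDiff ℝ (⊤ : ℕ∞) (fun ζ : ℂ => ζ.im) := Complex.imCLM.contDiff

lemma Zmap_contDiffOn : ContDiffOn ℝ (⊤ : ℕ∞) Zmap (ball (0:ℂ) 1) := by
  have hden : ∀ ζ ∈ ball (0:ℂ) 1, (1 - ζ.re^2 - ζ.im^2) ≠ 0 :=
    fun ζ hζ => (dpos_of_mem_ball hζ).ne'
  have hP : ContDiffOn ℝ (⊤ : ℕ∞) pfun (ball 0 1) := by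
    rw [pfun_eq]
    exact Real.contDiff_arctan.comp_contDiffOn
      (((contDiff_const.mul (contDiff_re.sub contDiff_im)).contDiffOn).div
        (((contDiff_const.sub (contDiff_re.pow 2)).sub (contDiff_im.pow 2)).contDiffOn) hden)
  have hQ : ContDiffOn ℝ (⊤ : ℕ∞) qfun (ball 0 1) := by
    rw [qfun_eq]
    exact Real.contDiff_arctan.comp_contDiffOn
      (((contDiff_const.mul (contDiff_re.add contDiff_im)).contDiffOn).div
        (((contDiff_const.sub (contDiff_re.pow 2)).sub (contDiff_im.pow 2)).contDiffOn) hden)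
  rw [Zmap_eq]
  exact (Complex.ofRealCLM.contDiff.comp_contDiffOn ((hP.add hQ).div_const _)).add
    (contDiffOn_const.mul (Complex.ofRealCLM.contDiff.comp_contDiffOn ((hQ.sub hP).div_const _)))

lemma gmap_contDiffOn : ContDiffOn ℝ (⊤ : ℕ∞) gmap {w : ℂ | |w.re| + |w.im| < 1} := by
  intro w hw
  apply ContDiffAt.contDiffWithinAt
  have hπ := Real.pi_pos
  simp only [Set.mem_setOf_eq] at hw
  have hre1 : |w.re - w.im| < 1 := by
    rcases abs_cases w.re with ⟨h1, _⟩ | ⟨h1, _⟩ <;> rcases abs_cases w.im with ⟨h2, _⟩ | ⟨h2, _⟩ <;>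
      rw [abs_lt] <;> constructor <;> linarith
  have hre2 : |w.re + w.im| < 1 := by
    rcases abs_cases w.re with ⟨h1, _⟩ | ⟨h1, _⟩ <;> rcases abs_cases w.im with ⟨h2, _⟩ | ⟨h2, _⟩ <;>
      rw [abs_lt] <;> constructor <;> linarith
  have hre1' := abs_lt.1 hre1
  have hre2' := abs_lt.1 hre2
  have hm1 := mul_lt_mul_of_pos_left hre1'.2 hπ
  have hm2 := mul_lt_mul_of_pos_left hre1'.1 hπ
  have hm3 := mul_lt_mul_of_pos_left hre2'.2 hπ
  have hm4 := mul_lt_mul_of_pos_left hre2'.1 hπ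
  have hp1 : -(Real.pi/2) < Real.pi * (w.re - w.im) / 2 := by nlinarith [hm2]
  have hp2 : Real.pi * (w.re - w.im) / 2 < Real.pi/2 := by nlinarith [hm1]
  have hq1 : -(Real.pi/2) < Real.pi * (w.re + w.im) / 2 := by nlinarith [hm4]
  have hq2 : Real.pi * (w.re + w.im) / 2 < Real.pi/2 := by nlinarith [hm3]
  have haff1 : ContDiffAt ℝ (⊤ : ℕ∞) (fun w : ℂ => Real.pi * (w.re - w.im) / 2) w :=
    (((contDiff_const.mul (contDiff_re.sub contDiff_im)).div_const 2).contDiffAt)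
  have haff2 : ContDiffAt ℝ (⊤ : ℕ∞) (fun w : ℂ => Real.pi * (w.re + w.im) / 2) w :=
    (((contDiff_const.mul (contDiff_re.add contDiff_im)).div_const 2).contDiffAt)
  have hT1 : ContDiffAt ℝ (⊤ : ℕ∞) Tp w := by
    rw [Tp_eq]
    exact ContDiffAt.comp (g := Real.tan) (f := fun w : ℂ => Real.pi * (w.re - w.im) / 2) w (Real.contDiffAt_tan.2
      (ne_of_gt (Real.cos_pos_of_mem_Ioo ⟨hp1, hp2⟩))) haff1
  have hT2 : ContDiffAt ℝ (⊤ : ℕ∞) Tq w := by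
    rw [Tq_eq]
    exact ContDiffAt.comp (g := Real.tan) (f := fun w : ℂ => Real.pi * (w.re + w.im) / 2) w (Real.contDiffAt_tan.2
      (ne_of_gt (Real.cos_pos_of_mem_Ioo ⟨hq1, hq2⟩))) haff2
  have hin : ContDiffAt ℝ (⊤ : ℕ∞) (fun w : ℂ => 1 + (Tp w ^ 2 + Tq w ^ 2)) w :=
    contDiffAt_const.add ((hT1.pow 2).add (hT2.pow 2))
  have hsq : ContDiffAt ℝ (⊤ : ℕ∞) (fun w : ℂ => Real.sqrt (1 + (Tp w ^ 2 + Tq w ^ 2))) w :=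
    (Real.contDiffAt_sqrt (by positivity)).comp w hin
  have hden_pos : (0:ℝ) < 1 + Real.sqrt (1 + (Tp w ^ 2 + Tq w ^ 2)) := by positivity
  have hlam : ContDiffAt ℝ (⊤ : ℕ∞) lam w := by
    rw [lam_eq]
    exact contDiffAt_const.div (contDiffAt_const.add hsq) (ne_of_gt hden_pos)
  have h1 : ContDiffAt ℝ (⊤ : ℕ∞) (fun w : ℂ => (lam w * (Tq w + Tp w) / Real.sqrt 2 : ℝ)) w :=
    (hlam.mul (hT2.add hT1)).div_const _
  have h2 : ContDiffAt ℝ (⊤ : ℕ∞) (fun w : ℂ => (lam w * (Tq w - Tp w) / Real.sqrt 2 : ℝ)) w :=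
    (hlam.mul (hT2.sub hT1)).div_const _
  rw [gmap_eq]
  exact (Complex.ofRealCLM.contDiff.contDiffAt.comp w h1).add
    (contDiffAt_const.mul (Complex.ofRealCLM.contDiff.contDiffAt.comp w h2))

set_option maxHeartbeats 1000000 in
lemma Zmap_jac {ζ : ℂ} (hζ : ζ ∈ ball (0:ℂ) 1) :
    0 < (deriv (fun s : ℝ => Zmap (ζ + ↑s)) 0).re * (deriv (fun s : ℝ => Zmap (ζ + ↑s * I)) 0).im
      - (deriv (fun s : ℝ => Zmap (ζ + ↑s)) 0).im * (deriv (fun s : ℝ => Zmap (ζ + ↑s * I)) 0).re := by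
  have hs2 := sqrt2_sq
  have hd := dpos_of_mem_ball hζ
  have hπ := Real.pi_pos
  have hPu : HasDerivAt (fun s : ℝ => Real.arctan (Real.sqrt 2 * ((ζ.re + s) - ζ.im) / (1 - (ζ.re + s)^2 - ζ.im^2))) (Real.sqrt 2 * ((1 - ζ.re^2 - ζ.im^2) + 2*ζ.re*(ζ.re - ζ.im)) / ((1 - ζ.re^2 - ζ.im^2)^2 + 2*(ζ.re - ζ.im)^2)) 0 := by
    have hb : HasDerivAt (fun s : ℝ => ζ.re + s) 1 0 := by
      simpa using (hasDerivAt_id (0:ℝ)).const_add ζ.re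
    have hnum : HasDerivAt (fun s : ℝ => Real.sqrt 2 * ((ζ.re + s) - ζ.im)) (Real.sqrt 2) 0 := by
      simpa using (hb.sub_const ζ.im).const_mul (Real.sqrt 2)
    have hpow : HasDerivAt (fun s : ℝ => (ζ.re + s)^2) (2*ζ.re) 0 := by
      simpa using hb.fun_pow 2
    have hden : HasDerivAt (fun s : ℝ => (1 - (ζ.re + s)^2 - ζ.im^2)) (-(2*ζ.re)) 0 := by
      simpa using (hpow.const_sub 1).sub_const (ζ.im^2)
    have hd0 : (1 - (ζ.re + 0)^2 - ζ.im^2) ≠ 0 := by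
      have he : (1 - (ζ.re + 0)^2 - ζ.im^2) = (1 - ζ.re^2 - ζ.im^2) := by ring
      rw [he]; exact hd.ne'
    have hdiv := hnum.div hden hd0
    have harc := (Real.hasDerivAt_arctan (Real.sqrt 2 * ((ζ.re + 0) - ζ.im) / (1 - (ζ.re + 0)^2 - ζ.im^2))).comp 0 hdiv
    simp only [add_zero] at harc
    refine harc.congr_deriv ?_
    have h1 : 1 + (Real.sqrt 2 * (ζ.re - ζ.im) / (1 - ζ.re^2 - ζ.im^2))^2 = ((1 - ζ.re^2 - ζ.im^2)^2 + 2*(ζ.re - ζ.im)^2) / (1 - ζ.re^2 - ζ.im^2)^2 := by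
      field_simp
      linear_combination ((ζ.re - ζ.im)^2) * hs2
    rw [h1, one_div_div]
    field_simp
    ring
  have hQu : HasDerivAt (fun s : ℝ => Real.arctan (Real.sqrt 2 * ((ζ.re + s) + ζ.im) / (1 - (ζ.re + s)^2 - ζ.im^2))) (Real.sqrt 2 * ((1 - ζ.re^2 - ζ.im^2) + 2*ζ.re*(ζ.re + ζ.im)) / ((1 - ζ.re^2 - ζ.im^2)^2 + 2*(ζ.re + ζ.im)^2)) 0 := by
    have hb : HasDerivAt (fun s : ℝ => ζ.re + s) 1 0 := by
      simpa using (hasDerivAt_id (0:ℝ)).const_add ζ.re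
    have hnum : HasDerivAt (fun s : ℝ => Real.sqrt 2 * ((ζ.re + s) + ζ.im)) (Real.sqrt 2) 0 := by
      simpa using (hb.add_const ζ.im).const_mul (Real.sqrt 2)
    have hpow : HasDerivAt (fun s : ℝ => (ζ.re + s)^2) (2*ζ.re) 0 := by
      simpa using hb.fun_pow 2
    have hden : HasDerivAt (fun s : ℝ => (1 - (ζ.re + s)^2 - ζ.im^2)) (-(2*ζ.re)) 0 := by
      simpa using (hpow.const_sub 1).sub_const (ζ.im^2)
    have hd0 : (1 - (ζ.re + 0)^2 - ζ.im^2) ≠ 0 := by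
      have he : (1 - (ζ.re + 0)^2 - ζ.im^2) = (1 - ζ.re^2 - ζ.im^2) := by ring
      rw [he]; exact hd.ne'
    have hdiv := hnum.div hden hd0
    have harc := (Real.hasDerivAt_arctan (Real.sqrt 2 * ((ζ.re + 0) + ζ.im) / (1 - (ζ.re + 0)^2 - ζ.im^2))).comp 0 hdiv
    simp only [add_zero] at harc
    refine harc.congr_deriv ?_
    have h1 : 1 + (Real.sqrt 2 * (ζ.re + ζ.im) / (1 - ζ.re^2 - ζ.im^2))^2 = ((1 - ζ.re^2 - ζ.im^2)^2 + 2*(ζ.re + ζ.im)^2) / (1 - ζ.re^2 - ζ.im^2)^2 := by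
      field_simp
      linear_combination ((ζ.re + ζ.im)^2) * hs2
    rw [h1, one_div_div]
    field_simp
    ring
  have hPv : HasDerivAt (fun s : ℝ => Real.arctan (Real.sqrt 2 * (ζ.re - (ζ.im + s)) / (1 - ζ.re^2 - (ζ.im + s)^2))) (Real.sqrt 2 * (-(1 - ζ.re^2 - ζ.im^2) + 2*ζ.im*(ζ.re - ζ.im)) / ((1 - ζ.re^2 - ζ.im^2)^2 + 2*(ζ.re - ζ.im)^2)) 0 := by
    have hb : HasDerivAt (fun s : ℝ => ζ.im + s) 1 0 := by
      simpa using (hasDerivAt_id (0:ℝ)).const_add ζ.im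
    have hnum : HasDerivAt (fun s : ℝ => Real.sqrt 2 * (ζ.re - (ζ.im + s))) (-Real.sqrt 2) 0 := by
      simpa using (hb.const_sub ζ.re).const_mul (Real.sqrt 2)
    have hpow : HasDerivAt (fun s : ℝ => (ζ.im + s)^2) (2*ζ.im) 0 := by
      simpa using hb.fun_pow 2
    have hden : HasDerivAt (fun s : ℝ => (1 - ζ.re^2 - (ζ.im + s)^2)) (-(2*ζ.im)) 0 := by
      simpa using hpow.const_sub (1 - ζ.re^2)
    have hd0 : (1 - ζ.re^2 - (ζ.im + 0)^2) ≠ 0 := by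
      have he : (1 - ζ.re^2 - (ζ.im + 0)^2) = (1 - ζ.re^2 - ζ.im^2) := by ring
      rw [he]; exact hd.ne'
    have hdiv := hnum.div hden hd0
    have harc := (Real.hasDerivAt_arctan (Real.sqrt 2 * (ζ.re - (ζ.im + 0)) / (1 - ζ.re^2 - (ζ.im + 0)^2))).comp 0 hdiv
    simp only [add_zero] at harc
    refine harc.congr_deriv ?_
    have h1 : 1 + (Real.sqrt 2 * (ζ.re - ζ.im) / (1 - ζ.re^2 - ζ.im^2))^2 = ((1 - ζ.re^2 - ζ.im^2)^2 + 2*(ζ.re - ζ.im)^2) / (1 - ζ.re^2 - ζ.im^2)^2 := by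
      field_simp
      linear_combination ((ζ.re - ζ.im)^2) * hs2
    rw [h1, one_div_div]
    field_simp
    ring
  have hQv : HasDerivAt (fun s : ℝ => Real.arctan (Real.sqrt 2 * (ζ.re + (ζ.im + s)) / (1 - ζ.re^2 - (ζ.im + s)^2))) (Real.sqrt 2 * ((1 - ζ.re^2 - ζ.im^2) + 2*ζ.im*(ζ.re + ζ.im)) / ((1 - ζ.re^2 - ζ.im^2)^2 + 2*(ζ.re + ζ.im)^2)) 0 := by
    have hb : HasDerivAt (fun s : ℝ => ζ.im + s) 1 0 := by
      simpa using (hasDerivAt_id (0:ℝ)).const_add ζ.im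
    have hnum : HasDerivAt (fun s : ℝ => Real.sqrt 2 * (ζ.re + (ζ.im + s))) (Real.sqrt 2) 0 := by
      simpa using (hb.const_add ζ.re).const_mul (Real.sqrt 2)
    have hpow : HasDerivAt (fun s : ℝ => (ζ.im + s)^2) (2*ζ.im) 0 := by
      simpa using hb.fun_pow 2
    have hden : HasDerivAt (fun s : ℝ => (1 - ζ.re^2 - (ζ.im + s)^2)) (-(2*ζ.im)) 0 := by
      simpa using hpow.const_sub (1 - ζ.re^2)
    have hd0 : (1 - ζ.re^2 - (ζ.im + 0)^2) ≠ 0 := by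
      have he : (1 - ζ.re^2 - (ζ.im + 0)^2) = (1 - ζ.re^2 - ζ.im^2) := by ring
      rw [he]; exact hd.ne'
    have hdiv := hnum.div hden hd0
    have harc := (Real.hasDerivAt_arctan (Real.sqrt 2 * (ζ.re + (ζ.im + 0)) / (1 - ζ.re^2 - (ζ.im + 0)^2))).comp 0 hdiv
    simp only [add_zero] at harc
    refine harc.congr_deriv ?_
    have h1 : 1 + (Real.sqrt 2 * (ζ.re + ζ.im) / (1 - ζ.re^2 - ζ.im^2))^2 = ((1 - ζ.re^2 - ζ.im^2)^2 + 2*(ζ.re + ζ.im)^2) / (1 - ζ.re^2 - ζ.im^2)^2 := by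
      field_simp
      linear_combination ((ζ.re + ζ.im)^2) * hs2
    rw [h1, one_div_div]
    field_simp
    ring
  have hfp1 : (fun s : ℝ => pfun (ζ + ↑s)) = (fun s : ℝ => Real.arctan (Real.sqrt 2 * ((ζ.re + s) - ζ.im) / (1 - (ζ.re + s)^2 - ζ.im^2))) := by
    funext s
    rw [pfun]
    norm_num [Complex.add_re, Complex.add_im]
  have hfq1 : (fun s : ℝ => qfun (ζ + ↑s)) = (fun s : ℝ => Real.arctan (Real.sqrt 2 * ((ζ.re + s) + ζ.im) / (1 - (ζ.re + s)^2 - ζ.im^2))) := by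
    funext s
    rw [qfun]
    norm_num [Complex.add_re, Complex.add_im]
  have hfp2 : (fun s : ℝ => pfun (ζ + ↑s * I)) = (fun s : ℝ => Real.arctan (Real.sqrt 2 * (ζ.re - (ζ.im + s)) / (1 - ζ.re^2 - (ζ.im + s)^2))) := by
    funext s
    rw [pfun]
    norm_num [Complex.add_re, Complex.add_im]
  have hfq2 : (fun s : ℝ => qfun (ζ + ↑s * I)) = (fun s : ℝ => Real.arctan (Real.sqrt 2 * (ζ.re + (ζ.im + s)) / (1 - ζ.re^2 - (ζ.im + s)^2))) := by
    funext s
    rw [qfun]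
    norm_num [Complex.add_re, Complex.add_im]
  have hP1 : HasDerivAt (fun s : ℝ => pfun (ζ + ↑s)) (Real.sqrt 2 * ((1 - ζ.re^2 - ζ.im^2) + 2*ζ.re*(ζ.re - ζ.im)) / ((1 - ζ.re^2 - ζ.im^2)^2 + 2*(ζ.re - ζ.im)^2)) 0 := by rw [hfp1]; exact hPu
  have hQ1 : HasDerivAt (fun s : ℝ => qfun (ζ + ↑s)) (Real.sqrt 2 * ((1 - ζ.re^2 - ζ.im^2) + 2*ζ.re*(ζ.re + ζ.im)) / ((1 - ζ.re^2 - ζ.im^2)^2 + 2*(ζ.re + ζ.im)^2)) 0 := by rw [hfq1]; exact hQu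
  have hP2 : HasDerivAt (fun s : ℝ => pfun (ζ + ↑s * I)) (Real.sqrt 2 * (-(1 - ζ.re^2 - ζ.im^2) + 2*ζ.im*(ζ.re - ζ.im)) / ((1 - ζ.re^2 - ζ.im^2)^2 + 2*(ζ.re - ζ.im)^2)) 0 := by rw [hfp2]; exact hPv
  have hQ2 : HasDerivAt (fun s : ℝ => qfun (ζ + ↑s * I)) (Real.sqrt 2 * ((1 - ζ.re^2 - ζ.im^2) + 2*ζ.im*(ζ.re + ζ.im)) / ((1 - ζ.re^2 - ζ.im^2)^2 + 2*(ζ.re + ζ.im)^2)) 0 := by rw [hfq2]; exact hQv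
  have hZ1 : HasDerivAt (fun s : ℝ => Zmap (ζ + ↑s))
      (((((Real.sqrt 2 * ((1 - ζ.re^2 - ζ.im^2) + 2*ζ.re*(ζ.re - ζ.im)) / ((1 - ζ.re^2 - ζ.im^2)^2 + 2*(ζ.re - ζ.im)^2)) + (Real.sqrt 2 * ((1 - ζ.re^2 - ζ.im^2) + 2*ζ.re*(ζ.re + ζ.im)) / ((1 - ζ.re^2 - ζ.im^2)^2 + 2*(ζ.re + ζ.im)^2)))/Real.pi : ℝ) : ℂ) + I * ((((Real.sqrt 2 * ((1 - ζ.re^2 - ζ.im^2) + 2*ζ.re*(ζ.re + ζ.im)) / ((1 - ζ.re^2 - ζ.im^2)^2 + 2*(ζ.re + ζ.im)^2)) - (Real.sqrt 2 * ((1 - ζ.re^2 - ζ.im^2) + 2*ζ.re*(ζ.re - ζ.im)) / ((1 - ζ.re^2 - ζ.im^2)^2 + 2*(ζ.re - ζ.im)^2)))/Real.pi : ℝ) : ℂ)) 0 := by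
    simp only [Zmap_eq]
    exact (((hP1.add hQ1).div_const Real.pi).ofReal_comp).add
      ((((hQ1.sub hP1).div_const Real.pi).ofReal_comp).const_mul I)
  have hZ2 : HasDerivAt (fun s : ℝ => Zmap (ζ + ↑s * I))
      (((((Real.sqrt 2 * (-(1 - ζ.re^2 - ζ.im^2) + 2*ζ.im*(ζ.re - ζ.im)) / ((1 - ζ.re^2 - ζ.im^2)^2 + 2*(ζ.re - ζ.im)^2)) + (Real.sqrt 2 * ((1 - ζ.re^2 - ζ.im^2) + 2*ζ.im*(ζ.re + ζ.im)) / ((1 - ζ.re^2 - ζ.im^2)^2 + 2*(ζ.re + ζ.im)^2)))/Real.pi : ℝ) : ℂ) + I * ((((Real.sqrt 2 * ((1 - ζ.re^2 - ζ.im^2) + 2*ζ.im*(ζ.re + ζ.im)) / ((1 - ζ.re^2 - ζ.im^2)^2 + 2*(ζ.re + ζ.im)^2)) - (Real.sqrt 2 * (-(1 - ζ.re^2 - ζ.im^2) + 2*ζ.im*(ζ.re - ζ.im)) / ((1 - ζ.re^2 - ζ.im^2)^2 + 2*(ζ.re - ζ.im)^2)))/Real.pi : ℝ) : ℂ)) 0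 := by
    simp only [Zmap_eq]
    exact (((hP2.add hQ2).div_const Real.pi).ofReal_comp).add
      ((((hQ2.sub hP2).div_const Real.pi).ofReal_comp).const_mul I)
  rw [hZ1.deriv, hZ2.deriv]
  have hre1 : ((((((Real.sqrt 2 * ((1 - ζ.re^2 - ζ.im^2) + 2*ζ.re*(ζ.re - ζ.im)) / ((1 - ζ.re^2 - ζ.im^2)^2 + 2*(ζ.re - ζ.im)^2)) + (Real.sqrt 2 * ((1 - ζ.re^2 - ζ.im^2) + 2*ζ.re*(ζ.re + ζ.im)) / ((1 - ζ.re^2 - ζ.im^2)^2 + 2*(ζ.re + ζ.im)^2)))/Real.pi : ℝ)) : ℂ) + I * ((((Real.sqrt 2 * ((1 - ζ.re^2 - ζ.im^2) + 2*ζ.re*(ζ.re + ζ.im)) / ((1 - ζ.re^2 - ζ.im^2)^2 + 2*(ζ.re + ζ.im)^2)) - (Real.sqrt 2 * ((1 - ζ.re^2 - ζ.im^2) + 2*ζ.re*(ζ.re - ζ.im)) / ((1 - ζ.re^2 - ζ.im^2)^2 + 2*(ζ.re - ζ.im)^2)))/Real.pi : ℝ) : ℂ)).re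
      = ((Real.sqrt 2 * ((1 - ζ.re^2 - ζ.im^2) + 2*ζ.re*(ζ.re - ζ.im)) / ((1 - ζ.re^2 - ζ.im^2)^2 + 2*(ζ.re - ζ.im)^2)) + (Real.sqrt 2 * ((1 - ζ.re^2 - ζ.im^2) + 2*ζ.re*(ζ.re + ζ.im)) / ((1 - ζ.re^2 - ζ.im^2)^2 + 2*(ζ.re + ζ.im)^2)))/Real.pi := by
    simp only [Complex.add_re, Complex.add_im, Complex.mul_re, Complex.mul_im,
      Complex.I_re, Complex.I_im, Complex.ofReal_re, Complex.ofReal_im]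
    ring
  have him1 : ((((((Real.sqrt 2 * ((1 - ζ.re^2 - ζ.im^2) + 2*ζ.re*(ζ.re - ζ.im)) / ((1 - ζ.re^2 - ζ.im^2)^2 + 2*(ζ.re - ζ.im)^2)) + (Real.sqrt 2 * ((1 - ζ.re^2 - ζ.im^2) + 2*ζ.re*(ζ.re + ζ.im)) / ((1 - ζ.re^2 - ζ.im^2)^2 + 2*(ζ.re + ζ.im)^2)))/Real.pi : ℝ)) : ℂ) + I * ((((Real.sqrt 2 * ((1 - ζ.re^2 - ζ.im^2) + 2*ζ.re*(ζ.re + ζ.im)) / ((1 - ζ.re^2 - ζ.im^2)^2 + 2*(ζ.re + ζ.im)^2)) - (Real.sqrt 2 * ((1 - ζ.re^2 - ζ.im^2) + 2*ζ.re*(ζ.re - ζ.im)) / ((1 - ζ.re^2 - ζ.im^2)^2 + 2*(ζ.re - ζ.im)^2)))/Real.pi : ℝ) : ℂ)).im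
      = ((Real.sqrt 2 * ((1 - ζ.re^2 - ζ.im^2) + 2*ζ.re*(ζ.re + ζ.im)) / ((1 - ζ.re^2 - ζ.im^2)^2 + 2*(ζ.re + ζ.im)^2)) - (Real.sqrt 2 * ((1 - ζ.re^2 - ζ.im^2) + 2*ζ.re*(ζ.re - ζ.im)) / ((1 - ζ.re^2 - ζ.im^2)^2 + 2*(ζ.re - ζ.im)^2)))/Real.pi := by
    simp only [Complex.add_re, Complex.add_im, Complex.mul_re, Complex.mul_im,
      Complex.I_re, Complex.I_im, Complex.ofReal_re, Complex.ofReal_im]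
    ring
  have hre2 : ((((((Real.sqrt 2 * (-(1 - ζ.re^2 - ζ.im^2) + 2*ζ.im*(ζ.re - ζ.im)) / ((1 - ζ.re^2 - ζ.im^2)^2 + 2*(ζ.re - ζ.im)^2)) + (Real.sqrt 2 * ((1 - ζ.re^2 - ζ.im^2) + 2*ζ.im*(ζ.re + ζ.im)) / ((1 - ζ.re^2 - ζ.im^2)^2 + 2*(ζ.re + ζ.im)^2)))/Real.pi : ℝ)) : ℂ) + I * ((((Real.sqrt 2 * ((1 - ζ.re^2 - ζ.im^2) + 2*ζ.im*(ζ.re + ζ.im)) / ((1 - ζ.re^2 - ζ.im^2)^2 + 2*(ζ.re + ζ.im)^2)) - (Real.sqrt 2 * (-(1 - ζ.re^2 - ζ.im^2) + 2*ζ.im*(ζ.re - ζ.im)) / ((1 - ζ.re^2 - ζ.im^2)^2 + 2*(ζ.re - ζ.im)^2)))/Real.pi : ℝ) : ℂ)).re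
      = ((Real.sqrt 2 * (-(1 - ζ.re^2 - ζ.im^2) + 2*ζ.im*(ζ.re - ζ.im)) / ((1 - ζ.re^2 - ζ.im^2)^2 + 2*(ζ.re - ζ.im)^2)) + (Real.sqrt 2 * ((1 - ζ.re^2 - ζ.im^2) + 2*ζ.im*(ζ.re + ζ.im)) / ((1 - ζ.re^2 - ζ.im^2)^2 + 2*(ζ.re + ζ.im)^2)))/Real.pi := by
    simp only [Complex.add_re, Complex.add_im, Complex.mul_re, Complex.mul_im,
      Complex.I_re, Complex.I_im, Complex.ofReal_re, Complex.ofReal_im]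
    ring
  have him2 : ((((((Real.sqrt 2 * (-(1 - ζ.re^2 - ζ.im^2) + 2*ζ.im*(ζ.re - ζ.im)) / ((1 - ζ.re^2 - ζ.im^2)^2 + 2*(ζ.re - ζ.im)^2)) + (Real.sqrt 2 * ((1 - ζ.re^2 - ζ.im^2) + 2*ζ.im*(ζ.re + ζ.im)) / ((1 - ζ.re^2 - ζ.im^2)^2 + 2*(ζ.re + ζ.im)^2)))/Real.pi : ℝ)) : ℂ) + I * ((((Real.sqrt 2 * ((1 - ζ.re^2 - ζ.im^2) + 2*ζ.im*(ζ.re + ζ.im)) / ((1 - ζ.re^2 - ζ.im^2)^2 + 2*(ζ.re + ζ.im)^2)) - (Real.sqrt 2 * (-(1 - ζ.re^2 - ζ.im^2) + 2*ζ.im*(ζ.re - ζ.im)) / ((1 - ζ.re^2 - ζ.im^2)^2 + 2*(ζ.re - ζ.im)^2)))/Real.pi : ℝ) : ℂ)).im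
      = ((Real.sqrt 2 * ((1 - ζ.re^2 - ζ.im^2) + 2*ζ.im*(ζ.re + ζ.im)) / ((1 - ζ.re^2 - ζ.im^2)^2 + 2*(ζ.re + ζ.im)^2)) - (Real.sqrt 2 * (-(1 - ζ.re^2 - ζ.im^2) + 2*ζ.im*(ζ.re - ζ.im)) / ((1 - ζ.re^2 - ζ.im^2)^2 + 2*(ζ.re - ζ.im)^2)))/Real.pi := by
    simp only [Complex.add_re, Complex.add_im, Complex.mul_re, Complex.mul_im,
      Complex.I_re, Complex.I_im, Complex.ofReal_re, Complex.ofReal_im]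
    ring
  rw [hre1, him1, hre2, him2]
  have hDp : 0 < ((1 - ζ.re^2 - ζ.im^2)^2 + 2*(ζ.re - ζ.im)^2) := by nlinarith [mul_pos hd hd, sq_nonneg (ζ.re - ζ.im)]
  have hDq : 0 < ((1 - ζ.re^2 - ζ.im^2)^2 + 2*(ζ.re + ζ.im)^2) := by nlinarith [mul_pos hd hd, sq_nonneg (ζ.re + ζ.im)]
  have hkey : (Real.sqrt 2 * ((1 - ζ.re^2 - ζ.im^2) + 2*ζ.re*(ζ.re - ζ.im)) / ((1 - ζ.re^2 - ζ.im^2)^2 + 2*(ζ.re - ζ.im)^2))*(Real.sqrt 2 * ((1 - ζ.re^2 - ζ.im^2) + 2*ζ.im*(ζ.re + ζ.im)) / ((1 - ζ.re^2 - ζ.im^2)^2 + 2*(ζ.re + ζ.im)^2)) - (Real.sqrt 2 * ((1 - ζ.re^2 - ζ.im^2) + 2*ζ.re*(ζ.re + ζ.im)) / ((1 - ζ.re^2 - ζ.im^2)^2 + 2*(ζ.re + ζ.im)^2))*(Real.sqrt 2 * (-(1 - ζ.re^2 - ζ.im^2) + 2*ζ.im*(ζ.re - ζ.im)) / ((1 -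 ζ.re^2 - ζ.im^2)^2 + 2*(ζ.re - ζ.im)^2))
      = 4*(1 - ζ.re^2 - ζ.im^2)*(1 + ζ.re^2 + ζ.im^2)/(((1 - ζ.re^2 - ζ.im^2)^2 + 2*(ζ.re - ζ.im)^2)*((1 - ζ.re^2 - ζ.im^2)^2 + 2*(ζ.re + ζ.im)^2)) := by
    field_simp
    ring_nf
    simp only [hs2]
    ring
  have hpos2 : 0 < (Real.sqrt 2 * ((1 - ζ.re^2 - ζ.im^2) + 2*ζ.re*(ζ.re - ζ.im)) / ((1 - ζ.re^2 - ζ.im^2)^2 + 2*(ζ.re - ζ.im)^2))*(Real.sqrt 2 * ((1 - ζ.re^2 - ζ.im^2) + 2*ζ.im*(ζ.re + ζ.im)) / ((1 - ζ.re^2 - ζ.im^2)^2 + 2*(ζ.re + ζ.im)^2)) - (Real.sqrt 2 * ((1 - ζ.re^2 - ζ.im^2) + 2*ζ.re*(ζ.re + ζ.im)) / ((1 - ζ.re^2 - ζ.im^2)^2 + 2*(ζ.re + ζ.im)^2))*(Real.sqrt 2 * (-(1 - ζ.re^2 - ζ.im^2) + 2*ζ.im*(ζ.re - ζ.im)) /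 ((1 - ζ.re^2 - ζ.im^2)^2 + 2*(ζ.re - ζ.im)^2)) := by
    rw [hkey]
    exact div_pos (by nlinarith [hd, sq_nonneg ζ.re, sq_nonneg ζ.im]) (mul_pos hDp hDq)
  have hge : ((Real.sqrt 2 * ((1 - ζ.re^2 - ζ.im^2) + 2*ζ.re*(ζ.re - ζ.im)) / ((1 - ζ.re^2 - ζ.im^2)^2 + 2*(ζ.re - ζ.im)^2)) + (Real.sqrt 2 * ((1 - ζ.re^2 - ζ.im^2) + 2*ζ.re*(ζ.re + ζ.im)) / ((1 - ζ.re^2 - ζ.im^2)^2 + 2*(ζ.re + ζ.im)^2)))/Real.pi * (((Real.sqrt 2 * ((1 - ζ.re^2 - ζ.im^2) + 2*ζ.im*(ζ.re + ζ.im)) / ((1 - ζ.re^2 - ζ.im^2)^2 + 2*(ζ.re + ζ.im)^2)) - (Real.sqrt 2 * (-(1 - ζ.re^2 - ζ.im^2) + 2*ζ.im*(ζ.re - ζ.im)) / ((1 - ζ.re^2 - ζ.im^2)^2 + 2*(ζ.re - ζ.im)^2)))/Real.pi)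
      - ((Real.sqrt 2 * ((1 - ζ.re^2 - ζ.im^2) + 2*ζ.re*(ζ.re + ζ.im)) / ((1 - ζ.re^2 - ζ.im^2)^2 + 2*(ζ.re + ζ.im)^2)) - (Real.sqrt 2 * ((1 - ζ.re^2 - ζ.im^2) + 2*ζ.re*(ζ.re - ζ.im)) / ((1 - ζ.re^2 - ζ.im^2)^2 + 2*(ζ.re - ζ.im)^2)))/Real.pi * (((Real.sqrt 2 * (-(1 - ζ.re^2 - ζ.im^2) + 2*ζ.im*(ζ.re - ζ.im)) / ((1 - ζ.re^2 - ζ.im^2)^2 + 2*(ζ.re - ζ.im)^2)) + (Real.sqrt 2 * ((1 - ζ.re^2 - ζ.im^2) + 2*ζ.im*(ζ.re + ζ.im)) / ((1 - ζ.re^2 - ζ.im^2)^2 + 2*(ζ.re + ζ.im)^2)))/Real.pi)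
      = 2*((Real.sqrt 2 * ((1 - ζ.re^2 - ζ.im^2) + 2*ζ.re*(ζ.re - ζ.im)) / ((1 - ζ.re^2 - ζ.im^2)^2 + 2*(ζ.re - ζ.im)^2))*(Real.sqrt 2 * ((1 - ζ.re^2 - ζ.im^2) + 2*ζ.im*(ζ.re + ζ.im)) / ((1 - ζ.re^2 - ζ.im^2)^2 + 2*(ζ.re + ζ.im)^2)) - (Real.sqrt 2 * ((1 - ζ.re^2 - ζ.im^2) + 2*ζ.re*(ζ.re + ζ.im)) / ((1 - ζ.re^2 - ζ.im^2)^2 + 2*(ζ.re + ζ.im)^2))*(Real.sqrt 2 * (-(1 - ζ.re^2 - ζ.im^2) + 2*ζ.im*(ζ.re - ζ.im)) / ((1 - ζ.re^2 - ζ.im^2)^2 + 2*(ζ.re - ζ.im)^2)))/Real.pi^2 := by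
    field_simp
    ring
  rw [hge]
  exact div_pos (by linarith) (by positivity)


/-- The map `ζ ↦ z(ζ) = hm_E + i·hm_N − hm_W − i·hm_S` is an orientation-preserving
diffeomorphism from the unit disc `𝔻` onto the open square `◇ = {|x|+|y| < 1}`. -/
theorem aztec_z_map_diffeomorphism
    (a : Fin 4 → ℂ → ℝ)
    (hacont : ∀ m, ContinuousOn (a m) (ball 0 1))
    (haarg : ∀ m, ∀ ζ ∈ ball (0:ℂ) 1,
      (‖Complex.exp ((arcAngle m : ℝ) * I) - ζ‖ : ℂ)
          * Complex.exp ((a m ζ : ℝ) * I)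
        = Complex.exp ((arcAngle m : ℝ) * I) - ζ)
    (ha0 : ∀ m, a m 0 = arcAngle m)
    (hmE hmN hmW hmS : ℂ → ℝ)
    (hE : ∀ ζ, hmE ζ = (1 / Real.pi) * (a 0 ζ - (a 3 ζ - 2 * Real.pi)) - 1/4)
    (hN : ∀ ζ, hmN ζ = (1 / Real.pi) * (a 1 ζ - a 0 ζ) - 1/4)
    (hW : ∀ ζ, hmW ζ = (1 / Real.pi) * (a 2 ζ - a 1 ζ) - 1/4)
    (hS : ∀ ζ, hmS ζ = (1 / Real.pi) * (a 3 ζ - a 2 ζ) - 1/4)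
    (z : ℂ → ℂ)
    (hz : ∀ ζ, z ζ = (hmE ζ : ℝ) + I * (hmN ζ : ℝ) - (hmW ζ : ℝ) - I * (hmS ζ : ℝ)) :
    Set.BijOn z (ball (0:ℂ) 1) {w : ℂ | |w.re| + |w.im| < 1} ∧
    ContDiffOn ℝ (⊤ : ℕ∞) z (ball (0:ℂ) 1) ∧
    (∃ g : ℂ → ℂ, ContDiffOn ℝ (⊤ : ℕ∞) g {w : ℂ | |w.re| + |w.im| < 1} ∧
      (∀ ζ ∈ ball (0:ℂ) 1, g (z ζ) = ζ) ∧
      (∀ w ∈ {w : ℂ | |w.re| + |w.im| < 1}, z (g w) = w)) ∧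
    (∀ ζ ∈ ball (0:ℂ) 1,
      0 < (deriv (fun s : ℝ => z (ζ + s)) 0).re
            * (deriv (fun s : ℝ => z (ζ + s * I)) 0).im
          - (deriv (fun s : ℝ => z (ζ + s)) 0).im
            * (deriv (fun s : ℝ => z (ζ + s * I)) 0).re) := by
  have h02 := adiff0 hacont haarg ha0
  have h13 := adiff1 hacont haarg ha0
  have hπ : Real.pi ≠ 0 := Real.pi_ne_zero
  have hzZ : ∀ ζ ∈ ball (0:ℂ) 1, z ζ = Zmap ζ := by
    intro ζ hζ
    have e1 := h02 ζ hζ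
    have e2 := h13 ζ hζ
    rw [hz, hE, hN, hW, hS, Zmap]
    apply Complex.ext
    · simp only [Complex.add_re, Complex.sub_re, Complex.mul_re, Complex.I_re, Complex.I_im,
        Complex.ofReal_re, Complex.ofReal_im]
      field_simp
      linear_combination 4*e1 + 4*e2
    · simp only [Complex.add_im, Complex.sub_im, Complex.mul_im, Complex.I_re, Complex.I_im,
        Complex.ofReal_re, Complex.ofReal_im]
      field_simp
      linear_combination 4*e2 - 4*e1
  have hEqOn : Set.EqOn Zmap z (ball (0:ℂ) 1) := fun ζ hζ => (hzZ ζ hζ).symm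
  have hBij : Set.BijOn Zmap (ball (0:ℂ) 1) {w : ℂ | |w.re| + |w.im| < 1} := by
    apply Set.InvOn.bijOn (f' := gmap)
    · exact ⟨fun ζ hζ => gmap_Zmap hζ, fun w hw => (gmap_facts hw).2⟩
    · exact Zmap_mapsTo
    · exact fun w hw => (gmap_facts hw).1
  refine ⟨hBij.congr hEqOn, Zmap_contDiffOn.congr hzZ, ⟨gmap, gmap_contDiffOn, ?_, ?_⟩, ?_⟩
  · intro ζ hζ
    rw [hzZ ζ hζ]
    exact gmap_Zmap hζ
  · intro w hw
    obtain ⟨hb, he⟩ := gmap_facts hw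
    rw [hzZ _ hb, he]
  · intro ζ hζ
    have hmemζ : ζ + ((0:ℝ):ℂ) ∈ ball (0:ℂ) 1 := by simpa using hζ
    have hmemζ' : ζ + ((0:ℝ):ℂ) * I ∈ ball (0:ℂ) 1 := by simpa using hζ
    have hc1 : ContinuousAt (fun s : ℝ => ζ + (s:ℂ)) 0 :=
      (continuous_const.add Complex.continuous_ofReal).continuousAt
    have hc2 : ContinuousAt (fun s : ℝ => ζ + (s:ℂ) * I) 0 :=
      (continuous_const.add (Complex.continuous_ofReal.mul continuous_const)).continuousAt
    have hev1 : (fun s : ℝ => z (ζ + s)) =ᶠ[nhds (0:ℝ)] (fun s : ℝ => Zmap (ζ + s)) := by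
      filter_upwards [hc1.preimage_mem_nhds (isOpen_ball.mem_nhds hmemζ)] with s hs
      exact hzZ _ hs
    have hev2 : (fun s : ℝ => z (ζ + s * I)) =ᶠ[nhds (0:ℝ)] (fun s : ℝ => Zmap (ζ + s * I)) := by
      filter_upwards [hc2.preimage_mem_nhds (isOpen_ball.mem_nhds hmemζ')] with s hs
      exact hzZ _ hs
    rw [hev1.deriv_eq, hev2.deriv_eq]
    exact Zmap_jac hζ
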